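/- arXiv:1503.03616 — 3 statements merged into one kernel-verified Lean document; each statement's English description precedes it below -/
import Mathlib

section
/- Fix n ∈ ℕ and λ ∈ 𝒫. Suppose μ and ν are partitions, each obtained from λ by a finite sequence of unwrappings of rim hooks of size n, such that neither μ nor ν has any rim hook of size n (i.e. there is no node (a,b) ∈ [μ] with |𝔥_{a,b}(μ)| = n, and similarly for ν). Then μ = ν (this common partition is the n-core of λ). Moreover, for any s ∈ ℤ, this n-core equals Par(C), where C = ⋃_{c=0}^{n−1} {c + in : i ∈ ℤ, i < m_c} with m_c = |{i ≥ 0 : c + in ∈ β_s(λ)}| − |{i < 0 : c + in ∉ β_s(λ)}|. -/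
open scoped BigOperators

/-- A partition: infinite weakly decreasing sequence of non-negative integers that is
eventually zero.  `parts i` denotes `λ_{i+1}` (zero-indexed). -/
structure YPartition where
  parts : ℕ → ℕ
  antitone' : ∀ i j : ℕ, i ≤ j → parts j ≤ parts i
  eventually_zero' : ∃ N : ℕ, ∀ k : ℕ, N ≤ k → parts k = 0

/-- `β_s(λ) = {λ_i + s - i : i ∈ ℕ}` (with `i ≥ 1`; `λ_{i+1} = parts i`). -/
def betaSet (lam : YPartition) (s : ℤ) : Set ℤ :=
  {x : ℤ | ∃ i : ℕ, x = (lam.parts i : ℤ) + s - (i + 1)}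

/-- A set of β-numbers. -/
def IsBetaSet (B : Set ℤ) : Prop :=
  (B ∩ {x : ℤ | 0 ≤ x}).Finite ∧ ({x : ℤ | x < 0} \ B).Finite

/-- `𝔰(B) = |ℕ₀ ∩ B| − |ℤ_{<0} \ B|`. -/
noncomputable def sInv (B : Set ℤ) : ℤ :=
  ((B ∩ {x : ℤ | 0 ≤ x}).ncard : ℤ) - (({x : ℤ | x < 0} \ B).ncard : ℤ)

/-- The Young diagram `[λ] = {(i,j) ∈ ℕ² : j ≤ λ_i}` with `i, j ≥ 1`. -/
def diagram (lam : YPartition) : Set (ℕ × ℕ) :=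
  {p : ℕ × ℕ | 1 ≤ p.1 ∧ 1 ≤ p.2 ∧ p.2 ≤ lam.parts (p.1 - 1)}

/-- `|λ|`, the number of nodes of `λ`. -/
noncomputable def wt (lam : YPartition) : ℕ := (diagram lam).ncard

/-- The `n`-residue of a node `(i,j)`, i.e. the class of `j - i` modulo `n`. -/
def res (n : ℕ) (p : ℕ × ℕ) : ZMod n := (((p.2 : ℤ) - (p.1 : ℤ)) : ZMod n)

def Removable (lam : YPartition) (p : ℕ × ℕ) : Prop :=
  p ∈ diagram lam ∧ ∃ mu : YPartition, diagram mu = diagram lam \ {p}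

def Addable (lam : YPartition) (p : ℕ × ℕ) : Prop :=
  p ∉ diagram lam ∧ ∃ mu : YPartition, diagram mu = diagram lam ∪ {p}

/-- The rim hook `𝔥_{a,b}(λ) = {(i,j) ∈ [λ] : i ≥ a, j ≥ max(b, λ_{i+1})}`. -/
def rimHook (lam : YPartition) (a b : ℕ) : Set (ℕ × ℕ) :=
  {p : ℕ × ℕ | p ∈ diagram lam ∧ a ≤ p.1 ∧ b ≤ p.2 ∧ lam.parts p.1 ≤ p.2}

/-- `μ` is obtained from `λ` by unwrapping a rim hook of size `c`. -/
def UnwrapHook (lam mu : YPartition) (c : ℕ) : Prop :=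
  ∃ a b : ℕ, (a, b) ∈ diagram lam ∧ diagram mu = diagram lam \ rimHook lam a b ∧
    (rimHook lam a b).ncard = c

/-- Strict lexicographic order on partitions: `λ > μ`. -/
def PartGT (lam mu : YPartition) : Prop :=
  ∃ r : ℕ, (∀ k : ℕ, k < r → lam.parts k = mu.parts k) ∧ mu.parts r < lam.parts r

def PartGE (lam mu : YPartition) : Prop := lam = mu ∨ PartGT lam mu

/-- Lexicographic comparison of integer sequences: `a > b`. -/
def SeqGT (a b : ℕ → ℤ) : Prop :=
  ∃ r : ℕ, (∀ k : ℕ, k < r → a k = b k) ∧ b r < a r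

/-- `B > B'` for sets of β-numbers, comparing decreasing enumerations lexicographically. -/
def BetaGT (B B' : Set ℤ) : Prop :=
  ∃ e e' : ℕ → ℤ, StrictAnti e ∧ StrictAnti e' ∧ Set.range e = B ∧ Set.range e' = B' ∧
    SeqGT e e'

def BetaGE (B B' : Set ℤ) : Prop := B = B' ∨ BetaGT B B'

/-- The relation `B →_n B'`. -/
def StepN (n : ℕ) (B B' : Set ℤ) : Prop :=
  ∃ a b : ℤ, ∃ i : ℕ, a ∈ B ∧ b ∈ B ∧ 1 ≤ i ∧ b + (i : ℤ) * (n : ℤ) < a ∧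
    a - (i : ℤ) * (n : ℤ) ∉ B ∧ b + (i : ℤ) * (n : ℤ) ∉ B ∧
    B' = (B \ {a, b}) ∪ {a - (i : ℤ) * (n : ℤ), b + (i : ℤ) * (n : ℤ)}

/-- The Jantzen order `λ ≥_{J_n} μ` on partitions. -/
def JantzenGE (n : ℕ) (lam mu : YPartition) : Prop :=
  ∃ s : ℤ, Relation.ReflTransGen (StepN n) (betaSet lam s) (betaSet mu s)

def JantzenGT (n : ℕ) (lam mu : YPartition) : Prop := JantzenGE n lam mu ∧ lam ≠ mu

/-- `n = n_1 + ⋯ + n_r`. -/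
def nTot {r : ℕ} (nn : Fin r → ℕ) : ℕ := ∑ k, nn k

/-- `σ_{j-1} = n_1 + ⋯ + n_{j-1}` (the sum of the entries before index `j`). -/
def sigBefore {r : ℕ} (nn : Fin r → ℕ) (j : Fin r) : ℕ :=
  ∑ k ∈ Finset.univ.filter (fun k : Fin r => (k : ℕ) < (j : ℕ)), nn k

/-- `X^𝐧_{i,j}(B) = {x − in − σ_{j−1} : x ∈ B ∩ ℤ^𝐧_{i,j}}`. -/
def Xset {r : ℕ} (nn : Fin r → ℕ) (B : Set ℤ) (i : ℤ) (j : Fin r) : Set ℤ :=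
  {y : ℤ | ∃ x ∈ B, (sigBefore nn j : ℤ) ≤ x - i * (nTot nn : ℤ) ∧
    x - i * (nTot nn : ℤ) < (sigBefore nn j : ℤ) + (nn j : ℤ) ∧
    y = x - i * (nTot nn : ℤ) - (sigBefore nn j : ℤ)}

/-- `𝚝^𝐧_B (i,j) = |X^𝐧_{i,j}(B)|`. -/
noncomputable def tfun {r : ℕ} (nn : Fin r → ℕ) (B : Set ℤ) : ℤ × Fin r → ℕ :=
  fun p => (Xset nn B p.1 p.2).ncard

/-- Membership in `T_𝐧`. -/
def memT {r : ℕ} (nn : Fin r → ℕ) (t : ℤ × Fin r → ℕ) : Prop :=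
  (∀ p : ℤ × Fin r, t p ≤ nn p.2) ∧
  {p : ℤ × Fin r | 0 ≤ p.1 ∧ t p ≠ 0}.Finite ∧
  {p : ℤ × Fin r | p.1 < 0 ∧ t p ≠ nn p.2}.Finite

/-- `𝔰(𝐭)`. -/
noncomputable def sT {r : ℕ} (nn : Fin r → ℕ) (t : ℤ × Fin r → ℕ) : ℤ :=
  (∑ᶠ p ∈ {p : ℤ × Fin r | 0 ≤ p.1}, (t p : ℤ)) -
  (∑ᶠ p ∈ {p : ℤ × Fin r | p.1 < 0}, ((nn p.2 : ℤ) - (t p : ℤ)))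

/-- `B_𝐭`, determined by `X^𝐧_{i,j}(B_𝐭) = {0, …, 𝐭(i,j) − 1}`. -/
def Bt {r : ℕ} (nn : Fin r → ℕ) (t : ℤ × Fin r → ℕ) : Set ℤ :=
  {x : ℤ | ∃ i : ℤ, ∃ j : Fin r,
    i * (nTot nn : ℤ) + (sigBefore nn j : ℤ) ≤ x ∧
    x < i * (nTot nn : ℤ) + (sigBefore nn j : ℤ) + (t (i, j) : ℤ)}

/-- One-runner version: `X^{(m)}_i(B)`. -/
def X1 (m : ℕ) (B : Set ℤ) (i : ℤ) : Set ℤ :=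
  {y : ℤ | ∃ x ∈ B, i * (m : ℤ) ≤ x ∧ x < (i + 1) * (m : ℤ) ∧ y = x - i * (m : ℤ)}

noncomputable def tfun1 (m : ℕ) (B : Set ℤ) : ℤ → ℕ := fun i => (X1 m B i).ncard

def memT1 (m : ℕ) (t : ℤ → ℕ) : Prop :=
  (∀ i : ℤ, t i ≤ m) ∧ {i : ℤ | 0 ≤ i ∧ t i ≠ 0}.Finite ∧ {i : ℤ | i < 0 ∧ t i ≠ m}.Finite

noncomputable def sT1 (m : ℕ) (t : ℤ → ℕ) : ℤ :=
  (∑ᶠ i ∈ {i : ℤ | 0 ≤ i}, (t i : ℤ)) - (∑ᶠ i ∈ {i : ℤ | i < 0}, ((m : ℤ) - (t i : ℤ)))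

/-- The strict partial order on `T_𝐧`. -/
def Tgt {r : ℕ} (nn : Fin r → ℕ) (t t' : ℤ × Fin r → ℕ) : Prop :=
  sT nn t = sT nn t' ∧
  ∃ i0 : ℤ, ∃ j0 : Fin r, t' (i0, j0) < t (i0, j0) ∧
    ∀ (i : ℤ) (j : Fin r), (i0 < i ∨ (i = i0 ∧ (j0 : ℕ) < (j : ℕ))) → t (i, j) = t' (i, j)

def Tge {r : ℕ} (nn : Fin r → ℕ) (t t' : ℤ × Fin r → ℕ) : Prop := t = t' ∨ Tgt nn t t'

/-- `m_c` from Statement 5. -/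
noncomputable def mcount (lam : YPartition) (s : ℤ) (n : ℕ) (c : ℕ) : ℤ :=
  ({i : ℤ | 0 ≤ i ∧ (c : ℤ) + i * (n : ℤ) ∈ betaSet lam s}.ncard : ℤ) -
  ({i : ℤ | i < 0 ∧ (c : ℤ) + i * (n : ℤ) ∉ betaSet lam s}.ncard : ℤ)

/-- `C = ⋃_{c<n} {c + in : i < m_c}` from Statement 5. -/
def coreSet (lam : YPartition) (s : ℤ) (n : ℕ) : Set ℤ :=
  {y : ℤ | ∃ c : ℕ, c < n ∧ ∃ i : ℤ, i < mcount lam s n c ∧ y = (c : ℤ) + i * (n : ℤ)}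

/-- The projection `π_𝐭` of the free module `𝔉` onto the span of `{s(λ) : λ ∈ 𝒫_𝐭}`. -/
noncomputable def proj {R : Type*} [Semiring R] {T : Type*} (ind : YPartition → T) (t : T)
    (v : YPartition →₀ R) : YPartition →₀ R := by
  classical
  exact Finsupp.onFinset v.support (fun mu => if ind mu = t then v mu else 0) <| by
    intro mu h
    rw [Finsupp.mem_support_iff]
    intro hv
    apply h
    simp [hv]

/-!
On the `n`-abacus, unwrapping a rim hook of size `n` moves one bead of the β-set from `x` to
the empty position `x - n`, and conversely every such bead move comes from a rim hook of size
`n`. Reading a β-set `B` runner by runner as `{i | c + i * n ∈ B}`, a bead move slides one bead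
of one runner down by one position, which preserves the charge `𝔰` of that runner; so the
charges `m_c` do not change along a sequence of unwrappings. Once no rim hook of size `n` is
left, every runner is closed under `i ↦ i - 1`, hence equals `{i | i < 𝔰}`, and the β-set is
the set `C` built from the charges of `λ` alone. Injectivity of `β_s` gives uniqueness of the
core.
-/

open Set

lemma ncard_Ico_int (a b : ℤ) : (Ico a b).ncard = (b - a).toNat := by
  simpa [← Set.ncard_coe_finset] using Int.card_Ico a b

namespace IsBetaSet

variable {B : Set ℤ}

lemma of_bounds {K L : ℤ} (hK : Iio K ⊆ B) (hL : B ⊆ Iio L) : IsBetaSet B :=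
  ⟨(finite_Ico 0 L).subset fun _ ⟨hxB, hx⟩ => ⟨hx, hL hxB⟩,
    (finite_Ico K 0).subset fun _ ⟨hx, hxB⟩ => ⟨not_lt.1 fun h => hxB (hK h), hx⟩⟩

lemma exists_Iio_subset (hB : IsBetaSet B) (L : ℤ) : ∃ K ≤ L, Iio K ⊆ B := by
  obtain ⟨M, hM⟩ := hB.2.bddBelow
  refine ⟨min (min M 0) L, min_le_right _ _, fun x hx => ?_⟩
  have hx : x < min (min M 0) L := hx
  by_contra hxB
  have := hM ⟨show x < 0 by omega, hxB⟩
  omega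

lemma exists_subset_Iio (hB : IsBetaSet B) : ∃ L, B ⊆ Iio L := by
  obtain ⟨M, hM⟩ := hB.1.bddAbove
  refine ⟨max M 0 + 1, fun x hxB => ?_⟩
  show x < max M 0 + 1
  by_cases hx : 0 ≤ x
  · have := hM ⟨hxB, hx⟩; omega
  · omega

lemma finite_inter_Ici (hB : IsBetaSet B) (K : ℤ) : (B ∩ Ici K).Finite :=
  (hB.1.union (finite_Ico K 0)).subset fun x ⟨hxB, hx⟩ => by
    by_cases h : 0 ≤ x
    · exact Or.inl ⟨hxB, h⟩
    · exact Or.inr ⟨hx, not_le.1 h⟩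

end IsBetaSet

lemma sInv_eq_ncard_inter_Ici_add {B : Set ℤ} {K : ℤ} (hK0 : K ≤ 0) (hK : Iio K ⊆ B)
    (hfin : (B ∩ Ici K).Finite) :
    sInv B = ((B ∩ Ici K).ncard : ℤ) + K := by
  have hsplit : B ∩ Ici K = (B ∩ {x | 0 ≤ x}) ∪ (B ∩ Ico K 0) := by
    ext x
    simp only [mem_inter_iff, mem_Ici, mem_union, mem_Ico, mem_ofPred_eq]
    grind
  have hneg : {x : ℤ | x < 0} \ B = Ico K 0 \ B := by
    ext x
    simp only [mem_sdiff, mem_ofPred_eq, mem_Ico]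
    exact ⟨fun ⟨hx, hxB⟩ => ⟨⟨not_lt.1 fun h => hxB (hK h), hx⟩, hxB⟩,
      fun ⟨hx, hxB⟩ => ⟨hx.2, hxB⟩⟩
  have hdisj : Disjoint (B ∩ {x | 0 ≤ x}) (B ∩ Ico K 0) :=
    disjoint_left.2 fun _ h1 h2 => not_lt.2 h1.2 h2.2.2
  have hcount := ncard_inter_add_ncard_sdiff_eq_ncard (Ico K 0) B (finite_Ico K 0)
  rw [ncard_Ico_int, inter_comm] at hcount
  rw [hsplit] at hfin ⊢
  rw [sInv, hneg, ncard_union_eq hdisj (hfin.subset subset_union_left)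
    (hfin.subset subset_union_right)]
  omega

lemma sInv_Iio (m : ℤ) : sInv (Iio m) = m := by
  have hIco : Iio m ∩ Ici (min m 0) = Ico (min m 0) m := by rw [inter_comm, Ici_inter_Iio]
  rw [sInv_eq_ncard_inter_Ici_add (min_le_right m 0) (Iio_subset_Iio (min_le_left m 0))
    (hIco ▸ finite_Ico _ _), hIco, ncard_Ico_int]
  omega

lemma sInv_insert_diff {B : Set ℤ} (hB : IsBetaSet B) {x y : ℤ} (hx : x ∈ B) (hy : y ∉ B) :
    sInv (insert y (B \ {x})) = sInv B := by
  obtain ⟨K, hKx, hK⟩ := hB.exists_Iio_subset (min x 0)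
  have hKy : K ≤ y := not_lt.1 fun h => hy (hK h)
  have hK' : Iio K ⊆ insert y (B \ {x}) := fun z hz =>
    Or.inr ⟨hK hz, ne_of_lt (lt_of_lt_of_le hz (hKx.trans (min_le_left _ _)))⟩
  have hmove : insert y (B \ {x}) ∩ Ici K = insert y ((B ∩ Ici K) \ {x}) := by
    ext z
    simp only [mem_inter_iff, mem_insert_iff, mem_sdiff, mem_singleton_iff, mem_Ici]
    constructor
    · rintro ⟨rfl | ⟨hz, hzx⟩, hzK⟩
      · exact Or.inl rfl
      · exact Or.inr ⟨⟨hz, hzK⟩, hzx⟩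
    · rintro (rfl | ⟨⟨hz, hzK⟩, hzx⟩)
      · exact ⟨Or.inl rfl, hKy⟩
      · exact ⟨Or.inr ⟨hz, hzx⟩, hzK⟩
  have hfin := hB.finite_inter_Ici K
  have hK0 : K ≤ 0 := hKx.trans (min_le_right _ _)
  have hxK : x ∈ B ∩ Ici K := ⟨hx, hKx.trans (min_le_left _ _)⟩
  rw [sInv_eq_ncard_inter_Ici_add hK0 hK' (by rw [hmove]; exact (hfin.sdiff).insert y), hmove,
    ncard_exchange (fun h => hy h.1) hxK, sInv_eq_ncard_inter_Ici_add hK0 hK hfin]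

lemma IsBetaSet.eq_Iio_sInv {R : Set ℤ} (hR : IsBetaSet R) (hdown : ∀ i ∈ R, i - 1 ∈ R) :
    R = Iio (sInv R) := by
  obtain ⟨K, -, hK⟩ := hR.exists_Iio_subset 0
  obtain ⟨L, hL⟩ := hR.exists_subset_Iio
  obtain ⟨m, hmR, hmin⟩ := Int.exists_least_of_bdd (P := fun i => i ∉ R)
    ⟨K, fun z hz => not_lt.1 fun h => hz (hK h)⟩ ⟨L, fun h => lt_irrefl L (hL h)⟩
  have hRm : R = Iio m := by
    ext i
    refine ⟨fun hi => mem_Iio.2 (not_le.1 fun hmi => hmR ?_),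
      fun hi => not_not.1 fun h => not_lt.2 (hmin i h) hi⟩
    have hbelow : ∀ j ≤ i, j ∈ R := fun j hj => by
      induction j, hj using Int.leInductionDown with
      | base => exact hi
      | pred j _ ih => exact hdown j ih
    exact hbelow m hmi
  rw [hRm, sInv_Iio]

def runner (n : ℕ) (c : ℤ) (B : Set ℤ) : Set ℤ := {i | c + i * n ∈ B}

section Runner

variable {n : ℕ} {B : Set ℤ}

lemma IsBetaSet.runner (hB : IsBetaSet B) (hn : 0 < n) (c : ℤ) : IsBetaSet (runner n c B) := by
  obtain ⟨K, -, hK⟩ := hB.exists_Iio_subset 0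
  obtain ⟨L, hL⟩ := hB.exists_subset_Iio
  refine .of_bounds (K := min (K - |c|) 0) (L := max (L + |c|) 0) (fun i hi => hK ?_)
    (fun i hi => ?_)
  · have hi : i < min (K - |c|) 0 := hi
    have : i * n ≤ i := by nlinarith [min_le_right (K - |c|) 0]
    show c + i * n < K
    have := le_abs_self c; have := min_le_left (K - |c|) 0; omega
  · have hi' := hL hi
    simp only [mem_Iio] at hi' ⊢
    by_contra h
    have : i ≤ i * n := by nlinarith [le_max_right (L + |c|) 0]
    have := neg_abs_le c; have := le_max_left (L + |c|) 0; omega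

lemma sInv_runner_insert_diff (hB : IsBetaSet B) (hn : 0 < n) {x : ℤ} (hx : x ∈ B)
    (hxn : x - n ∉ B) (c : ℤ) :
    sInv (runner n c (insert (x - n) (B \ {x}))) = sInv (runner n c B) := by
  have hn' : (n : ℤ) ≠ 0 := by exact_mod_cast hn.ne'
  by_cases hxc : ∃ i, c + i * n = x
  · obtain ⟨i, rfl⟩ := hxc
    have hrun : runner n c (insert (c + i * n - n) (B \ {c + i * n})) =
        insert (i - 1) (runner n c B \ {i}) := by
      ext j
      simp only [runner, mem_ofPred_eq, mem_insert_iff, mem_sdiff, mem_singleton_iff]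
      have h1 : c + j * n = c + i * n - n ↔ j = i - 1 := by
        constructor
        · intro h; exact mul_right_cancel₀ hn' (by linarith)
        · rintro rfl; ring
      have h2 : c + j * n = c + i * n ↔ j = i := by
        constructor
        · intro h; exact mul_right_cancel₀ hn' (by linarith)
        · rintro rfl; rfl
      rw [h1, h2]
    have hxn' : i - 1 ∉ runner n c B := by
      show c + (i - 1) * n ∉ B
      rwa [sub_mul, one_mul, ← add_sub_assoc]
    rw [hrun, sInv_insert_diff (hB.runner hn c) hx hxn']
  · push Not at hxc
    congr 1
    ext j
    simp only [runner, mem_ofPred_eq, mem_insert_iff, mem_sdiff, mem_singleton_iff]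
    have : c + j * n ≠ x - n := fun h => hxc (j + 1) (by linarith)
    simp [this, hxc j]

lemma eq_setOf_runner_of_sub_mem (hB : IsBetaSet B) (hn : 0 < n)
    (hdown : ∀ x ∈ B, x - n ∈ B) :
    B = {y | ∃ c : ℕ, c < n ∧ ∃ i : ℤ, i < sInv (runner n c B) ∧ y = c + i * n} := by
  have hrun : ∀ c : ℤ, runner n c B = Iio (sInv (runner n c B)) := fun c =>
    (hB.runner hn c).eq_Iio_sInv fun i hi => by
      simpa [runner, sub_mul, add_sub_assoc] using hdown _ hi
  ext y
  constructor
  · intro hy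
    have hn' : (0 : ℤ) < n := by exact_mod_cast hn
    have hdiv : y % n + y / n * n = y := Int.emod_add_ediv_mul y n
    have hmod := Int.emod_nonneg y hn'.ne'
    have hmod' := Int.emod_lt_of_pos y hn'
    have hyc : y = ((y % n).toNat : ℕ) + y / n * n := by omega
    have hmem : y / n ∈ runner n ((y % n).toNat : ℕ) B := by
      show _ ∈ B
      rwa [← hyc]
    rw [hrun] at hmem
    exact ⟨(y % n).toNat, by omega, y / n, hmem, hyc⟩
  · rintro ⟨c, -, i, hi, rfl⟩
    have : i ∈ runner n c B := by rw [hrun]; exact hi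
    exact this

end Runner

lemma YPartition.ext_parts {lam mu : YPartition} (h : lam.parts = mu.parts) : lam = mu := by
  cases lam; cases mu; congr

def betaSeq (lam : YPartition) (s : ℤ) (i : ℕ) : ℤ := lam.parts i + s - (i + 1)

section BetaSeq

variable (lam : YPartition) (s : ℤ)

lemma betaSeq_strictAnti : StrictAnti (betaSeq lam s) :=
  strictAnti_nat_of_succ_lt fun k => by
    have := lam.antitone' k (k + 1) k.le_succ
    simp only [betaSeq]; push_cast; omega

lemma betaSet_eq_range : betaSet lam s = range (betaSeq lam s) :=
  ext fun _ => exists_congr fun _ => eq_comm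

variable {lam} in
lemma betaSeq_of_parts_eq_zero {k : ℕ} (hk : lam.parts k = 0) : betaSeq lam s k = s - 1 - k := by
  simp only [betaSeq, hk]; push_cast; ring

lemma betaSet_injective : Function.Injective (betaSet · s) := by
  intro lam mu h
  simp only [betaSet_eq_range] at h
  have : OrderDual.toDual ∘ betaSeq lam s = OrderDual.toDual ∘ betaSeq mu s :=
    ((betaSeq_strictAnti lam s).dual_right.range_inj (betaSeq_strictAnti mu s).dual_right).1
      (by rw [range_comp, range_comp, h])
  refine YPartition.ext_parts (funext fun i => ?_)
  have hi := congrFun this i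
  simp only [Function.comp_apply, OrderDual.toDual_inj, betaSeq] at hi
  omega

lemma Iio_subset_betaSet {N : ℕ} (hN : ∀ k, N ≤ k → lam.parts k = 0) :
    Iio (s - N) ⊆ betaSet lam s := fun x hx => by
  have hx : x < s - N := hx
  refine ⟨(s - 1 - x).toNat, ?_⟩
  have := betaSeq_of_parts_eq_zero s (hN (s - 1 - x).toNat (by omega))
  simp only [betaSeq] at this
  omega

lemma isBetaSet_betaSet : IsBetaSet (betaSet lam s) := by
  obtain ⟨N, hN⟩ := lam.eventually_zero'
  refine .of_bounds (Iio_subset_betaSet lam s hN) (L := lam.parts 0 + s) ?_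
  rintro _ ⟨i, rfl⟩
  have := lam.antitone' 0 i i.zero_le
  simp only [mem_Iio]; omega

lemma sInv_betaSet : sInv (betaSet lam s) = s := by
  obtain ⟨N₀, hN₀⟩ := lam.eventually_zero'
  set N := N₀ + s.toNat
  have hN : ∀ k, N ≤ k → lam.parts k = 0 := fun k hk => hN₀ k (by omega)
  have hinter : betaSet lam s ∩ Ici (s - N) = betaSeq lam s '' Iio N := by
    rw [betaSet_eq_range]
    ext x
    simp only [mem_inter_iff, mem_range, mem_Ici, mem_image, mem_Iio]
    constructor
    · rintro ⟨⟨i, rfl⟩, hi⟩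
      refine ⟨i, not_le.1 fun hNi => ?_, rfl⟩
      rw [betaSeq_of_parts_eq_zero s (hN i hNi)] at hi
      omega
    · rintro ⟨i, hi, rfl⟩
      exact ⟨⟨i, rfl⟩, by simp only [betaSeq]; omega⟩
  rw [sInv_eq_ncard_inter_Ici_add (by omega) (Iio_subset_betaSet lam s hN)
    (hinter ▸ (finite_Iio N).image _), hinter,
    ncard_image_of_injective _ (betaSeq_strictAnti lam s).injective, ncard_Iio_nat]
  ring

end BetaSeq

section RimHook

variable (lam : YPartition)

variable {lam} in
lemma exists_rimHook_end {a b : ℕ} (hab : (a, b) ∈ diagram lam) :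
    ∃ e, a ≤ e ∧ b ≤ lam.parts (e - 1) ∧ lam.parts e < b := by
  classical
  obtain ⟨ha, hb, hba⟩ := hab
  obtain ⟨N, hN⟩ := lam.eventually_zero'
  have hex : ∃ e, lam.parts e < b := ⟨N, by rw [hN N le_rfl]; omega⟩
  have hae : a ≤ Nat.find hex := not_lt.1 fun h =>
    (Nat.find_spec hex).not_ge (hba.trans (lam.antitone' _ _ (by omega)))
  exact ⟨Nat.find hex, hae, not_lt.1 (Nat.find_min hex (by omega)), Nat.find_spec hex⟩

lemma rimHook_eq_biUnion {a b e : ℕ} (ha : 1 ≤ a) (hb : 1 ≤ b) (hPe : lam.parts e < b) :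
    rimHook lam a b = ↑((Finset.Icc a e).biUnion
      (fun i => ({i} : Finset ℕ) ×ˢ Finset.Icc (max b (lam.parts i)) (lam.parts (i - 1)))) := by
  ext p
  simp only [rimHook, diagram, mem_ofPred_eq, Finset.mem_coe, Finset.mem_biUnion,
    Finset.mem_Icc, Finset.mem_product, Finset.mem_singleton, sup_le_iff]
  constructor
  · rintro ⟨⟨h1, h2, h3⟩, h4, h5, h6⟩
    refine ⟨p.1, ⟨h4, not_lt.1 fun hc => ?_⟩, rfl, ⟨h5, h6⟩, h3⟩
    have := lam.antitone' e (p.1 - 1) (by omega)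
    omega
  · rintro ⟨i, ⟨hai, -⟩, rfl, ⟨hbp, hPp⟩, hup⟩
    exact ⟨⟨by omega, by omega, hup⟩, hai, hbp, hPp⟩

lemma sum_Icc_rim_rows (P : ℕ → ℕ) (hP : Antitone P) {a b e : ℕ}
    (ha : 1 ≤ a) (hae : a ≤ e) (hbe : b ≤ P (e - 1)) (hPe : P e < b) :
    ∑ i ∈ Finset.Icc a e, ((P (i - 1) : ℤ) + 1 - max (b : ℤ) (P i)) =
      (P (a - 1) : ℤ) + e + 1 - a - b := by
  obtain ⟨d, rfl⟩ : ∃ d, e = a + d := ⟨e - a, by omega⟩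
  induction d generalizing a with
  | zero =>
    rw [Nat.add_zero, Finset.Icc_self, Finset.sum_singleton,
      max_eq_left (by exact_mod_cast hPe.le)]
    ring
  | succ d ih =>
    have hsplit : Finset.Icc a (a + (d + 1)) = insert a (Finset.Icc (a + 1) (a + 1 + d)) := by
      ext x
      simp only [Finset.mem_Icc, Finset.mem_insert]
      omega
    have hba : b ≤ P a := hbe.trans (hP (by omega))
    rw [hsplit, Finset.sum_insert (by simp), ih (a := a + 1) (by omega) (by omega)
      (by rwa [show a + 1 + d - 1 = a + (d + 1) - 1 by omega])
      (by rwa [show a + 1 + d = a + (d + 1) by omega]),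
      max_eq_right (by exact_mod_cast hba)]
    push_cast
    ring

lemma ncard_rimHook {a b e : ℕ} (ha : 1 ≤ a) (hb : 1 ≤ b)
    (hae : a ≤ e) (hbe : b ≤ lam.parts (e - 1)) (hPe : lam.parts e < b) :
    ((rimHook lam a b).ncard : ℤ) = lam.parts (a - 1) + e + 1 - a - b := by
  have hanti : Antitone lam.parts := fun i j h => lam.antitone' i j h
  rw [rimHook_eq_biUnion lam ha hb hPe, ncard_coe_finset, Finset.card_biUnion]
  · have hrow : ∀ i ∈ Finset.Icc a e,
        ((({i} : Finset ℕ) ×ˢ Finset.Icc (max b (lam.parts i)) (lam.parts (i - 1))).card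
          : ℤ) =
          (lam.parts (i - 1) : ℤ) + 1 - max (b : ℤ) (lam.parts i) := by
      intro i hi
      rw [Finset.mem_Icc] at hi
      have hb' : b ≤ lam.parts (i - 1) := hbe.trans (hanti (by omega))
      have hi' : lam.parts i ≤ lam.parts (i - 1) := hanti (by omega)
      rw [Finset.card_product, Finset.card_singleton, one_mul, Nat.card_Icc]
      omega
    rw [Nat.cast_sum, Finset.sum_congr rfl hrow]
    exact sum_Icc_rim_rows lam.parts hanti ha hae hbe hPe
  · intro i _ j _ hij
    simp only [Function.onFun, Finset.disjoint_left, Finset.mem_product, Finset.mem_singleton]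
    exact fun p hp hq => hij (hp.1.symm.trans hq.1)

end RimHook

lemma range_eq_insert_diff_of_shift {f g : ℕ → ℤ} (hf : Function.Injective f) {r t : ℕ}
    (hrt : r ≤ t) (y : ℤ)
    (hg : ∀ k, g k =
      if k < r then f k else if k < t then f (k + 1) else if k = t then y else f k) :
    range g = insert y (range f \ {f r}) := by
  ext z
  simp only [mem_range, mem_insert_iff, mem_sdiff, mem_singleton_iff]
  constructor
  · rintro ⟨k, rfl⟩
    rw [hg k]
    split_ifs with h1 h2 h3
    · exact Or.inr ⟨⟨k, rfl⟩, fun h => by have := hf h; omega⟩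
    · exact Or.inr ⟨⟨k + 1, rfl⟩, fun h => by have := hf h; omega⟩
    · exact Or.inl rfl
    · exact Or.inr ⟨⟨k, rfl⟩, fun h => by have := hf h; omega⟩
  · rintro (rfl | ⟨⟨j, rfl⟩, hjr⟩)
    · exact ⟨t, by rw [hg t, if_neg (by omega), if_neg (by omega), if_pos rfl]⟩
    · have hjr : j ≠ r := fun h => hjr (h ▸ rfl)
      rcases lt_or_gt_of_ne hjr with hj | hj
      · exact ⟨j, by rw [hg j, if_pos hj]⟩
      · by_cases hjt : j ≤ t
        · refine ⟨j - 1, ?_⟩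
          rw [hg, if_neg (by omega), if_pos (by omega), Nat.sub_add_cancel (by omega)]
        · exact ⟨j, by rw [hg, if_neg (by omega), if_neg (by omega), if_neg (by omega)]⟩

lemma parts_eq_of_mem_diagram_iff (mu : YPartition) {k q : ℕ}
    (h : ∀ j, 1 ≤ j → ((k + 1, j) ∈ diagram mu ↔ j ≤ q)) : mu.parts k = q := by
  have hmem : ∀ j, 1 ≤ j → ((k + 1, j) ∈ diagram mu ↔ j ≤ mu.parts k) := fun j hj => by
    simp [diagram, hj]
  rcases lt_trichotomy (mu.parts k) q with hlt | heq | hgt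
  · have := (hmem q (by omega)).1 ((h q (by omega)).2 le_rfl); omega
  · exact heq
  · have := (h _ (by omega)).1 ((hmem (mu.parts k) (by omega)).2 le_rfl); omega

lemma parts_of_diagram_eq_diff_rimHook {lam mu : YPartition} {a b : ℕ}
    (hd : diagram mu = diagram lam \ rimHook lam a b) (k : ℕ) :
    mu.parts k = if k + 1 < a then lam.parts k
      else min (lam.parts k) (max b (lam.parts (k + 1)) - 1) := by
  refine parts_eq_of_mem_diagram_iff mu fun j hj => ?_
  rw [hd]
  simp only [mem_sdiff, rimHook, diagram, mem_ofPred_eq, Nat.add_sub_cancel]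
  split_ifs <;> omega

lemma betaSeq_of_diagram_eq_diff_rimHook {lam mu : YPartition} {a b e : ℕ}
    (hd : diagram mu = diagram lam \ rimHook lam a b) (hbe : b ≤ lam.parts (e - 1))
    (hPe : lam.parts e < b) (s : ℤ) (k : ℕ) :
    betaSeq mu s k = if k < a - 1 then betaSeq lam s k
      else if k < e - 1 then betaSeq lam s (k + 1)
      else if k = e - 1 then s + b - 1 - e
      else betaSeq lam s k := by
  have he : e ≠ 0 := by rintro rfl; exact absurd hbe (not_le.2 hPe)
  have hmu := parts_of_diagram_eq_diff_rimHook hd k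
  have hk := lam.antitone' k (k + 1) k.le_succ
  have hmid : k + 1 ≤ e - 1 → b ≤ lam.parts (k + 1) := fun h =>
    hbe.trans (lam.antitone' _ _ h)
  have hend : k = e - 1 → b ≤ lam.parts k ∧ lam.parts (k + 1) < b := fun h => by
    rw [h, Nat.sub_add_cancel (Nat.one_le_iff_ne_zero.2 he)]; exact ⟨hbe, hPe⟩
  have htail : e ≤ k → lam.parts k < b := fun h => (lam.antitone' _ _ h).trans_lt hPe
  simp only [betaSeq]
  rcases le_total b (lam.parts (k + 1)) with h | h <;>
    simp only [max_eq_left, max_eq_right, h] at hmu <;> split_ifs at hmu ⊢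
  all_goals omega

lemma notMem_betaSet_of_lt_of_lt {lam : YPartition} {s y : ℤ} {k : ℕ}
    (h₁ : betaSeq lam s (k + 1) < y) (h₂ : y < betaSeq lam s k) : y ∉ betaSet lam s := by
  rintro ⟨j, rfl⟩
  have hanti := betaSeq_strictAnti lam s
  have := hanti.lt_iff_gt.1 h₁
  have := hanti.lt_iff_gt.1 h₂
  omega

lemma exists_betaSet_eq_of_unwrapHook {lam mu : YPartition} {n : ℕ} (hu : UnwrapHook lam mu n)
    (s : ℤ) : ∃ x ∈ betaSet lam s, x - n ∉ betaSet lam s ∧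
      betaSet mu s = insert (x - n) (betaSet lam s \ {x}) := by
  obtain ⟨a, b, hab, hd, hcard⟩ := hu
  obtain ⟨e, hae, hbe, hPe⟩ := exists_rimHook_end hab
  have ha : 1 ≤ a := hab.1
  have hb : 1 ≤ b := hab.2.1
  have hn := ncard_rimHook lam ha hb hae hbe hPe
  rw [hcard] at hn
  have hxn : betaSeq lam s (a - 1) - n = s + b - 1 - e := by simp only [betaSeq]; omega
  refine ⟨betaSeq lam s (a - 1), ⟨a - 1, rfl⟩,
    hxn ▸ notMem_betaSet_of_lt_of_lt (k := e - 1) ?_ ?_, ?_⟩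
  · simp only [betaSeq, Nat.sub_add_cancel (ha.trans hae)]; omega
  · simp only [betaSeq]; omega
  rw [hxn, betaSet_eq_range, betaSet_eq_range]
  exact range_eq_insert_diff_of_shift (betaSeq_strictAnti lam s).injective (by omega) _
    (betaSeq_of_diagram_eq_diff_rimHook hd hbe hPe s)

lemma exists_rimHook_of_mem_of_sub_notMem {mu : YPartition} {n : ℕ} {s x : ℤ}
    (hx : x ∈ betaSet mu s) (hxn : x - n ∉ betaSet mu s) :
    ∃ a b : ℕ, (a, b) ∈ diagram mu ∧ (rimHook mu a b).ncard = n := by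
  classical
  obtain ⟨k, hk⟩ := hx
  replace hk : betaSeq mu s k = x := hk.symm
  have hex : ∃ m, betaSeq mu s m ≤ x - n := by
    obtain ⟨N, hN⟩ := mu.eventually_zero'
    refine ⟨N + (s - x + n).toNat, ?_⟩
    rw [betaSeq_of_parts_eq_zero s (hN _ (Nat.le_add_right _ _))]
    omega
  -- the hook runs from the row of `x` to row `m`, the first row whose β-number is below `x - n`
  set m := Nat.find hex
  have hm : betaSeq mu s m < x - n := (Nat.find_spec hex).lt_of_ne fun h => hxn ⟨m, h.symm⟩
  have hkm : k < m := (betaSeq_strictAnti mu s).lt_iff_gt.1 (by rw [hk]; omega)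
  have hm' : x - n < betaSeq mu s (m - 1) := not_le.1 (Nat.find_min hex (by omega))
  have hanti := mu.antitone' k (m - 1) (by omega)
  simp only [betaSeq] at hm hm' hk
  set b := (x - n - s + m + 1).toNat
  have hb : (b : ℤ) = x - n - s + m + 1 := Int.toNat_of_nonneg (by omega)
  have hbe : b ≤ mu.parts (m - 1) := by omega
  have hPe : mu.parts m < b := by omega
  refine ⟨k + 1, b, ⟨by omega, by omega, by simpa using hbe.trans hanti⟩, ?_⟩
  have := ncard_rimHook mu (Nat.le_add_left 1 k) (by omega) hkm hbe hPe
  simp only [Nat.add_sub_cancel] at this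
  omega

lemma mcount_eq_sInv_runner (lam : YPartition) (s : ℤ) (n c : ℕ) :
    mcount lam s n c = sInv (runner n c (betaSet lam s)) := by
  simp only [mcount, sInv, runner, inter_def, mem_ofPred_eq, sdiff_eq, compl_ofPred, and_comm]

lemma sInv_runner_eq_of_unwrapHook_chain {n : ℕ} (hn : 0 < n) {lam rho : YPartition}
    (h : Relation.ReflTransGen (fun x y : YPartition => UnwrapHook x y n) lam rho) (s c : ℤ) :
    sInv (runner n c (betaSet rho s)) = sInv (runner n c (betaSet lam s)) := by
  induction h with
  | refl => rfl
  | tail _ hstep ih =>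
    obtain ⟨x, hx, hxn, heq⟩ := exists_betaSet_eq_of_unwrapHook hstep s
    rw [heq, sInv_runner_insert_diff (isBetaSet_betaSet _ s) hn hx hxn, ih]

lemma betaSet_eq_coreSet_of_unwrapHook_chain {n : ℕ} (hn : 0 < n) {lam rho : YPartition}
    (h : Relation.ReflTransGen (fun x y : YPartition => UnwrapHook x y n) lam rho)
    (hno : ¬ ∃ a b : ℕ, (a, b) ∈ diagram rho ∧ (rimHook rho a b).ncard = n) (s : ℤ) :
    betaSet rho s = coreSet lam s n := by
  have hdown : ∀ x ∈ betaSet rho s, x - n ∈ betaSet rho s := fun x hx =>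
    not_not.1 fun hxn => hno (exists_rimHook_of_mem_of_sub_notMem hx hxn)
  rw [eq_setOf_runner_of_sub_mem (isBetaSet_betaSet rho s) hn hdown]
  simp only [coreSet, mcount_eq_sInv_runner, sInv_runner_eq_of_unwrapHook_chain hn h]

/-- The `n`-core is well-defined: any two partitions obtained from `λ` by
successively unwrapping rim hooks of size `n` until none remain are equal; moreover for any
`s`, this `n`-core is `Par(C)` for the explicit set `C = coreSet λ s n`. -/
theorem statement5 (n : ℕ) (hn : 0 < n) (lam mu nu : YPartition)
    (hmu : Relation.ReflTransGen (fun x y : YPartition => UnwrapHook x y n) lam mu)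
    (hnu : Relation.ReflTransGen (fun x y : YPartition => UnwrapHook x y n) lam nu)
    (hmu' : ¬ ∃ a b : ℕ, (a, b) ∈ diagram mu ∧ (rimHook mu a b).ncard = n)
    (hnu' : ¬ ∃ a b : ℕ, (a, b) ∈ diagram nu ∧ (rimHook nu a b).ncard = n) :
    mu = nu ∧ ∀ s : ℤ, betaSet mu (sInv (coreSet lam s n)) = coreSet lam s n := by
  have hcore_mu := betaSet_eq_coreSet_of_unwrapHook_chain hn hmu hmu'
  have hcore_nu := betaSet_eq_coreSet_of_unwrapHook_chain hn hnu hnu'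
  refine ⟨betaSet_injective 0 ((hcore_mu 0).trans (hcore_nu 0).symm), fun s => ?_⟩
  rw [← hcore_mu s, sInv_betaSet]
end

section
/- Let 𝐭 ∈ T_𝐧 and s = 𝔰(𝐭). If μ ∈ 𝒫 has, for every j = 0, 1, …, r−1, the same set of nodes of n-residue σ_j − s as λ_𝐭 (i.e. {𝔫 ∈ [μ] : 𝔫 has n-residue σ_j − s} = {𝔫 ∈ [λ_𝐭] : 𝔫 has n-residue σ_j − s}), then [λ_𝐭] ⊆ [μ]. -/
open scoped BigOperators

/-! ### Auxiliary machinery for Statement 13 -/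

lemma dc_eq_Iio (S : Set ℕ) (hfin : S.Finite) (hdc : ∀ k ∈ S, ∀ k', k' ≤ k → k' ∈ S) :
    S = Set.Iio S.ncard := by
  rcases S.eq_empty_or_nonempty with h | h
  · rw [h, Set.ncard_empty]
    exact (Set.Iio_eq_empty_iff.mpr (by simp)).symm
  · obtain ⟨M, hM, hmax⟩ := Set.Finite.exists_maximalFor id S hfin h
    have hS : S = Set.Iic M := by
      ext k
      simp only [Set.mem_Iic]
      constructor
      · intro hk
        by_contra hlt
        push_neg at hlt
        have := hmax hk (le_of_lt hlt)
        simp only [id_eq] at this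
        omega
      · intro hk
        exact hdc M hM k hk
    have h2 : (Set.Iic M : Set ℕ) = Set.Iio (M + 1) := by
      ext k; simp [Nat.lt_succ_iff]
    rw [hS, ← Finset.coe_Iic, Set.ncard_coe_finset, Nat.card_Iic, Finset.coe_Iic, h2]

/-- The β-numbers of `lam`, as a sequence. -/
def bseq (lam : YPartition) (s : ℤ) (k : ℕ) : ℤ := (lam.parts k : ℤ) + s - ((k : ℤ) + 1)

lemma bseq_strictAnti (lam : YPartition) (s : ℤ) : StrictAnti (bseq lam s) :=
  strictAnti_nat_of_succ_lt fun k => by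
    have := lam.antitone' k (k + 1) (by omega)
    unfold bseq; push_cast; omega

/-- The number of β-numbers that are `≥ X`. -/
noncomputable def Acount (lam : YPartition) (s X : ℤ) : ℕ := {k : ℕ | X ≤ bseq lam s k}.ncard

lemma Aset_fin (lam : YPartition) (s X : ℤ) : {k : ℕ | X ≤ bseq lam s k}.Finite := by
  apply Set.Finite.subset (Set.finite_Iio ((lam.parts 0 : ℤ) + s - X).toNat)
  intro k hk
  simp only [Set.mem_setOf_eq] at hk
  simp only [Set.mem_Iio]
  by_contra h
  push_neg at h
  have h1 : ((lam.parts 0 : ℤ) + s - X) ≤ (k : ℤ) :=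
    le_trans (Int.self_le_toNat _) (by exact_mod_cast h)
  have h2 : lam.parts k ≤ lam.parts 0 := lam.antitone' 0 k (Nat.zero_le k)
  unfold bseq at hk
  omega

lemma lt_Acount_iff (lam : YPartition) (s X : ℤ) (k : ℕ) :
    k < Acount lam s X ↔ X ≤ bseq lam s k := by
  have h := dc_eq_Iio {k : ℕ | X ≤ bseq lam s k} (Aset_fin lam s X)
    (fun k hk k' hk' => le_trans hk ((bseq_strictAnti lam s).antitone hk'))
  have h' : {k : ℕ | X ≤ bseq lam s k} = Set.Iio (Acount lam s X) := h
  constructor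
  · intro hlt
    have hm : k ∈ Set.Iio (Acount lam s X) := hlt
    rw [← h'] at hm
    exact hm
  · intro hle
    have hm : k ∈ {k : ℕ | X ≤ bseq lam s k} := hle
    rw [h'] at hm
    exact hm

lemma Acount_succ_le (lam : YPartition) (s X : ℤ) : Acount lam s (X + 1) ≤ Acount lam s X := by
  by_contra h
  push_neg at h
  have h1 : X + 1 ≤ bseq lam s (Acount lam s X) := (lt_Acount_iff lam s (X + 1) _).mp h
  have h2 : Acount lam s X < Acount lam s X :=
    (lt_Acount_iff lam s X _).mpr (by omega)
  omega

lemma Acount_le_succ (lam : YPartition) (s X : ℤ) :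
    Acount lam s X ≤ Acount lam s (X + 1) + 1 := by
  by_contra h
  push_neg at h
  set A' := Acount lam s (X + 1) with hA'
  have hb1 : X ≤ bseq lam s A' := (lt_Acount_iff lam s X A').mp (by omega)
  have hb2 : X ≤ bseq lam s (A' + 1) := (lt_Acount_iff lam s X (A' + 1)).mp (by omega)
  have hn1 : ¬ (X + 1 ≤ bseq lam s A') := fun hc =>
    absurd ((lt_Acount_iff lam s (X + 1) A').mpr hc) (by omega)
  have hn2 : ¬ (X + 1 ≤ bseq lam s (A' + 1)) := fun hc =>
    absurd ((lt_Acount_iff lam s (X + 1) (A' + 1)).mpr hc) (by omega)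
  have := bseq_strictAnti lam s (show A' < A' + 1 by omega)
  omega

lemma mem_betaSet_iff_Acount (lam : YPartition) (s x : ℤ) :
    x ∈ betaSet lam s ↔ Acount lam s x = Acount lam s (x + 1) + 1 := by
  have hle := Acount_le_succ lam s x
  have hge := Acount_succ_le lam s x
  constructor
  · rintro ⟨k, hk⟩
    have hkb : x = bseq lam s k := by unfold bseq; omega
    have h1 : k < Acount lam s x := (lt_Acount_iff lam s x k).mpr (le_of_eq hkb)
    have h2 : ¬ (k < Acount lam s (x + 1)) := fun hc => by
      have := (lt_Acount_iff lam s (x + 1) k).mp hc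
      omega
    omega
  · intro h
    set k := Acount lam s (x + 1) with hk
    have h1 : x ≤ bseq lam s k := (lt_Acount_iff lam s x k).mp (by omega)
    have h2 : ¬ (x + 1 ≤ bseq lam s k) := fun hc =>
      absurd ((lt_Acount_iff lam s (x + 1) k).mpr hc) (by omega)
    refine ⟨k, ?_⟩
    unfold bseq at h1 h2
    omega

lemma Acount_lower (lam : YPartition) (s X : ℤ) : s - X ≤ (Acount lam s X : ℤ) := by
  rcases le_or_gt (s - X) 0 with h | h
  · exact le_trans h (by positivity)
  · set k := (s - X - 1).toNat with hkdef
    have hk : (k : ℤ) = s - X - 1 := Int.toNat_of_nonneg (by omega)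
    have hb : X ≤ bseq lam s k := by unfold bseq; omega
    have := (lt_Acount_iff lam s X k).mpr hb
    omega

lemma Acount_vanish (lam : YPartition) (s X : ℤ) (h : (lam.parts 0 : ℤ) + s ≤ X) :
    Acount lam s X = 0 := by
  by_contra hne
  have h0 : 0 < Acount lam s X := Nat.pos_of_ne_zero hne
  have := (lt_Acount_iff lam s X 0).mp h0
  unfold bseq at this
  omega

lemma mem_diagram_iff (lam : YPartition) (s : ℤ) (p : ℕ × ℕ) :
    p ∈ diagram lam ↔ 1 ≤ p.1 ∧ 1 ≤ p.2 ∧ p.1 ≤ Acount lam s (s + (p.2 : ℤ) - (p.1 : ℤ)) := by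
  unfold diagram
  simp only [Set.mem_setOf_eq]
  constructor
  · rintro ⟨h1, h2, h3⟩
    refine ⟨h1, h2, ?_⟩
    have hc : ((p.1 - 1 : ℕ) : ℤ) = (p.1 : ℤ) - 1 := by omega
    have hb : s + (p.2 : ℤ) - (p.1 : ℤ) ≤ bseq lam s (p.1 - 1) := by
      unfold bseq
      rw [hc]
      have h3' : (p.2 : ℤ) ≤ (lam.parts (p.1 - 1) : ℤ) := by exact_mod_cast h3
      omega
    have := (lt_Acount_iff lam s _ (p.1 - 1)).mpr hb
    omega
  · rintro ⟨h1, h2, h3⟩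
    refine ⟨h1, h2, ?_⟩
    have hk : p.1 - 1 < Acount lam s (s + (p.2 : ℤ) - (p.1 : ℤ)) := by omega
    have hb := (lt_Acount_iff lam s _ (p.1 - 1)).mp hk
    unfold bseq at hb
    have hc : ((p.1 - 1 : ℕ) : ℤ) = (p.1 : ℤ) - 1 := by omega
    rw [hc] at hb
    omega

/-- `x` is congruent to some `σ_l` modulo `n`. -/
def MarkedP (n r : ℕ) (nn : Fin r → ℕ) (x : ℤ) : Prop :=
  ∃ l : Fin r, (x : ZMod n) = ((sigBefore nn l : ℕ) : ZMod n)

lemma Bt_prefix {n r : ℕ} (nn : Fin r → ℕ) (hsum : nTot nn = n) (t : ℤ × Fin r → ℕ)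
    (y : ℤ) (hy : y ∈ Bt nn t) (hnm : ¬ MarkedP n r nn y) : y - 1 ∈ Bt nn t := by
  obtain ⟨i, j, h1, h2⟩ := hy
  rcases eq_or_lt_of_le h1 with heq | hlt
  · exfalso
    apply hnm
    refine ⟨j, ?_⟩
    have hzero : ((nTot nn : ℕ) : ZMod n) = 0 := by rw [hsum]; exact ZMod.natCast_self n
    rw [← heq]
    push_cast
    rw [hzero]
    ring
  · exact ⟨i, j, by omega, by omega⟩



lemma marked_le {n r : ℕ} (nn : Fin r → ℕ) (s : ℤ) (lamt mu : YPartition)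
    (hmu : ∀ j : Fin r,
      {p ∈ diagram mu | res n p = (((sigBefore nn j : ℤ) - s : ℤ) : ZMod n)} =
      {p ∈ diagram lamt | res n p = (((sigBefore nn j : ℤ) - s : ℤ) : ZMod n)})
    (x : ℤ) (hm : MarkedP n r nn x) : Acount lamt s x ≤ Acount mu s x := by
  by_contra hcon
  push_neg at hcon
  obtain ⟨l, hl⟩ := hm
  set a := Acount lamt s x with ha
  have hlow := Acount_lower mu s x
  have ha1 : 1 ≤ a := by omega
  have hax : s - x < (a : ℤ) := by omega
  set c := (x - s + a).toNat with hcdef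
  have hc : (c : ℤ) = x - s + (a : ℤ) := Int.toNat_of_nonneg (by omega)
  have hc1 : 1 ≤ c := by omega
  have hx : s + (c : ℤ) - (a : ℤ) = x := by omega
  have hpd : (a, c) ∈ diagram lamt := by
    rw [mem_diagram_iff lamt s]
    refine ⟨ha1, hc1, ?_⟩
    show a ≤ Acount lamt s (s + (c : ℤ) - (a : ℤ))
    rw [hx]
  have hres : res n (a, c) = (((sigBefore nn l : ℤ) - s : ℤ) : ZMod n) := by
    have h3 : (((c : ℤ) - (a : ℤ) : ℤ) : ZMod n) = (((sigBefore nn l : ℤ) - s : ℤ) : ZMod n) := by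
      rw [show (c : ℤ) - (a : ℤ) = x - s by omega]
      push_cast
      rw [hl]
    show ((c : ℤ) : ZMod n) - ((a : ℤ) : ZMod n) = (((sigBefore nn l : ℤ) - s : ℤ) : ZMod n)
    push_cast at h3 ⊢
    exact h3
  have hmem : (a, c) ∈
      {p ∈ diagram mu | res n p = (((sigBefore nn l : ℤ) - s : ℤ) : ZMod n)} := by
    rw [hmu l]
    exact ⟨hpd, hres⟩
  have h2 : a ≤ Acount mu s (s + (c : ℤ) - (a : ℤ)) :=
    ((mem_diagram_iff mu s (a, c)).mp hmem.1).2.2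
  rw [hx] at h2
  omega

/-- If `μ` has, for every `j = 0, …, r−1`, the same set of nodes of
`n`-residue `σ_j − s` as `λ_𝐭`, then `[λ_𝐭] ⊆ [μ]`.  (In the `Fin r` indexing,
`σ_j` for `j = 0, …, r−1` is `sigBefore nn j`.) -/
theorem statement13 (n r : ℕ) (hr : 0 < r) (nn : Fin r → ℕ) (hpos : ∀ j : Fin r, 0 < nn j)
    (hsum : nTot nn = n) (t : ℤ × Fin r → ℕ) (ht : memT nn t)
    (s : ℤ) (hs : s = sT nn t)
    (lamt : YPartition) (hlamt : betaSet lamt s = Bt nn t)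
    (mu : YPartition)
    (hmu : ∀ j : Fin r,
      {p ∈ diagram mu | res n p = (((sigBefore nn j : ℤ) - s : ℤ) : ZMod n)} =
      {p ∈ diagram lamt | res n p = (((sigBefore nn j : ℤ) - s : ℤ) : ZMod n)}) :
    diagram lamt ⊆ diagram mu := by
  have hn : 0 < n := by
    rw [← hsum]
    calc 0 < nn ⟨0, hr⟩ := hpos ⟨0, hr⟩
    _ ≤ nTot nn := Finset.single_le_sum (f := nn) (fun i _ => Nat.zero_le _) (Finset.mem_univ _)
  have hsig0 : sigBefore nn ⟨0, hr⟩ = 0 := by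
    apply Finset.sum_eq_zero
    intro k hk
    simp only [Finset.mem_filter] at hk
    omega
  have hML : ∀ x : ℤ, MarkedP n r nn x → Acount lamt s x ≤ Acount mu s x :=
    fun x hx => marked_le nn s lamt mu hmu x hx
  have key : ∀ X : ℤ, Acount lamt s X ≤ Acount mu s X := by
    by_contra hcon
    push_neg at hcon
    obtain ⟨x0, hx0⟩ := hcon
    set D : ℤ → ℤ := fun X => (Acount lamt s X : ℤ) - (Acount mu s X : ℤ) with hD
    have hD0 : 0 < D x0 := by simp only [hD]; omega
    have hup : ∃ m : ℕ, D (x0 + (m : ℤ) + 1) ≤ 0 := by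
      refine ⟨((lamt.parts 0 : ℤ) + s - x0 - 1).toNat, ?_⟩
      have h1 : (lamt.parts 0 : ℤ) + s ≤ x0 + (((lamt.parts 0 : ℤ) + s - x0 - 1).toNat : ℤ) + 1 := by
        have := Int.self_le_toNat ((lamt.parts 0 : ℤ) + s - x0 - 1)
        omega
      have h2 := Acount_vanish lamt s _ h1
      simp only [hD]
      omega
    have hdn : ∃ m : ℕ, D (x0 - (m : ℤ) - 1) ≤ 0 := by
      refine ⟨((x0 - 1) % (n : ℤ)).toNat, ?_⟩
      have hmod : 0 ≤ (x0 - 1) % (n : ℤ) :=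
        Int.emod_nonneg _ (by exact_mod_cast hn.ne')
      have hmv : ((((x0 - 1) % (n : ℤ)).toNat : ℤ)) = (x0 - 1) % (n : ℤ) :=
        Int.toNat_of_nonneg hmod
      set y := x0 - ((((x0 - 1) % (n : ℤ)).toNat : ℤ)) - 1 with hy
      have hyv : y = (n : ℤ) * ((x0 - 1) / (n : ℤ)) := by
        have := Int.mul_ediv_add_emod (x0 - 1) (n : ℤ)
        omega
      have hmk : MarkedP n r nn y := by
        refine ⟨⟨0, hr⟩, ?_⟩
        rw [hsig0, hyv]
        push_cast
        simp [ZMod.natCast_self]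
      have := hML y hmk
      simp only [hD]
      omega
    set mstar := Nat.find hup with hmstar
    set mtil := Nat.find hdn with hmtil
    have hallup : ∀ m : ℕ, m ≤ mstar → 0 < D (x0 + (m : ℤ)) := by
      intro m hm
      rcases Nat.eq_zero_or_pos m with h0 | h0
      · subst h0
        have he : x0 + ((0 : ℕ) : ℤ) = x0 := by omega
        rw [he]
        exact hD0
      · obtain ⟨m', rfl⟩ : ∃ m', m = m' + 1 := ⟨m - 1, by omega⟩
        have hmin := Nat.find_min hup (show m' < mstar by omega)
        push_neg at hmin
        have he : x0 + ((m' + 1 : ℕ) : ℤ) = x0 + (m' : ℤ) + 1 := by push_cast; ring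
        rw [he]
        exact hmin
    have halldn : ∀ m : ℕ, m ≤ mtil → 0 < D (x0 - (m : ℤ)) := by
      intro m hm
      rcases Nat.eq_zero_or_pos m with h0 | h0
      · subst h0
        have he : x0 - ((0 : ℕ) : ℤ) = x0 := by omega
        rw [he]
        exact hD0
      · obtain ⟨m', rfl⟩ : ∃ m', m = m' + 1 := ⟨m - 1, by omega⟩
        have hmin := Nat.find_min hdn (show m' < mtil by omega)
        push_neg at hmin
        have he : x0 - ((m' + 1 : ℕ) : ℤ) = x0 - (m' : ℤ) - 1 := by push_cast; ring
        rw [he]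
        exact hmin
    set xstar := x0 + (mstar : ℤ) with hxstar
    set xtil := x0 - (mtil : ℤ) with hxtil
    have hDxstar : 0 < D xstar := hallup mstar le_rfl
    have hDnext : D (xstar + 1) ≤ 0 := by
      have := Nat.find_spec hup
      rw [← hmstar] at this
      have he : x0 + (mstar : ℤ) + 1 = xstar + 1 := by rw [hxstar]
      rwa [he] at this
    have hDxtil : 0 < D xtil := halldn mtil le_rfl
    have hDprev : D (xtil - 1) ≤ 0 := by
      have := Nat.find_spec hdn
      rw [← hmtil] at this
      have he : x0 - (mtil : ℤ) - 1 = xtil - 1 := by rw [hxtil]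
      rwa [he] at this
    have hBstar : xstar ∈ betaSet lamt s := by
      rw [mem_betaSet_iff_Acount]
      have e1 := Acount_succ_le lamt s xstar
      have e2 := Acount_le_succ lamt s xstar
      have f1 := Acount_succ_le mu s xstar
      simp only [hD] at hDxstar hDnext
      omega
    have hnotB : xtil - 1 ∉ betaSet lamt s := by
      intro hmem
      rw [mem_betaSet_iff_Acount] at hmem
      rw [show xtil - 1 + 1 = xtil by ring] at hmem
      have f2 := Acount_le_succ mu s (xtil - 1)
      rw [show xtil - 1 + 1 = xtil by ring] at f2
      simp only [hD] at hDprev hDxtil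
      omega
    have hDpos : ∀ y : ℤ, xtil ≤ y → y ≤ xstar → 0 < D y := by
      intro y h1 h2
      rcases le_or_gt x0 y with h | h
      · have hm : ((y - x0).toNat : ℤ) = y - x0 := Int.toNat_of_nonneg (by omega)
        have hle : (y - x0).toNat ≤ mstar := by omega
        have := hallup _ hle
        rw [show x0 + ((y - x0).toNat : ℤ) = y by omega] at this
        exact this
      · have hm : ((x0 - y).toNat : ℤ) = x0 - y := Int.toNat_of_nonneg (by omega)
        have hle : (x0 - y).toNat ≤ mtil := by omega
        have := halldn _ hle
        rw [show x0 - ((x0 - y).toNat : ℤ) = y by omega] at this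
        exact this
    have hUnm : ∀ y : ℤ, xtil ≤ y → y ≤ xstar → ¬ MarkedP n r nn y := by
      intro y h1 h2 hmk
      have hle := hML y hmk
      have hpos := hDpos y h1 h2
      simp only [hD] at hpos
      omega
    have hchain : ∀ m : ℕ, (m : ℤ) ≤ xstar - xtil → xstar - (m : ℤ) ∈ betaSet lamt s := by
      intro m
      induction m with
      | zero =>
        intro _
        rw [show xstar - ((0 : ℕ) : ℤ) = xstar by omega]
        exact hBstar
      | succ m ih =>
        intro hle
        have hle' : (m : ℤ) ≤ xstar - xtil := by push_cast at hle; omega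
        have hm := ih hle'
        have hunm : ¬ MarkedP n r nn (xstar - (m : ℤ)) := by
          apply hUnm
          · push_cast at hle; omega
          · omega
        rw [hlamt] at hm
        have hstep := Bt_prefix nn hsum t _ hm hunm
        rw [show xstar - ((m + 1 : ℕ) : ℤ) = xstar - (m : ℤ) - 1 by push_cast; ring, hlamt]
        exact hstep
    have hge : xtil ≤ xstar := by
      rw [hxstar, hxtil]
      have : (0 : ℤ) ≤ (mstar : ℤ) := by positivity
      have : (0 : ℤ) ≤ (mtil : ℤ) := by positivity
      omega
    have hBtil : xtil ∈ betaSet lamt s := by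
      have hfm : ((xstar - xtil).toNat : ℤ) = xstar - xtil := Int.toNat_of_nonneg (by omega)
      have := hchain (xstar - xtil).toNat (le_of_eq hfm)
      rwa [show xstar - ((xstar - xtil).toNat : ℤ) = xtil by omega] at this
    have hunm := hUnm xtil le_rfl hge
    rw [hlamt] at hBtil
    have hlast := Bt_prefix nn hsum t _ hBtil hunm
    rw [← hlamt] at hlast
    exact hnotB hlast
  intro p hp
  rw [mem_diagram_iff lamt s] at hp
  rw [mem_diagram_iff mu s]
  exact ⟨hp.1, hp.2.1, le_trans hp.2.2 (key _)⟩
end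

section
/- Let 𝐭 ∈ T_𝐧, and for each j = 1, …, r define 𝐭_j : ℤ → ℕ₀ by 𝐭_j(i) = 𝐭(i,j). Then: (1) each 𝐭_j belongs to T_{(n_j)} (the set T over the one-term tuple (n_j)), and Σ_{j=1}^r 𝔰(𝐭_j) = 𝔰(𝐭); (2) the map B ↦ (B_1, …, B_r), where B_j = {x + i·n_j : i ∈ ℤ, x ∈ X^𝐧_{i,j}(B)}, is a bijection from 𝔅_𝐭 onto 𝔅_{𝐭_1} × ⋯ × 𝔅_{𝐭_r} (where 𝔅_{𝐭_j} is defined with respect to the tuple (n_j)). -/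
open scoped BigOperators

/-! Write every integer uniquely as `x = i n + σ_{j-1} + z` with `0 ≤ z < n_j`, and send it to
the position `i n_j + z` on runner `j`. This is a sign-preserving bijection `ℤ ≃ Fin r × ℤ`,
and `B ↦ (B_1, …, B_r)` is transport of sets along it. Hence it is a bijection
`Set ℤ → (Fin r → Set ℤ)` which identifies `X^𝐧_{i,j}(B)` with `X^{(n_j)}_i(B_j)` and under
which `B` is a set of β-numbers iff every `B_j` is. Part (1) regroups the finitely
supported sums defining `𝔰(𝐭)` runner by runner. -/

theorem Set.finite_iff_forall_finite_preimage_prodMk {α β : Type*} [Finite α] {s : Set (α × β)} :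
    s.Finite ↔ ∀ a, (Prod.mk a ⁻¹' s).Finite := by
  refine ⟨fun hs a => hs.preimage (Prod.mk_right_injective a).injOn, fun h => ?_⟩
  refine (Set.finite_iUnion fun a => (h a).image (Prod.mk a)).subset ?_
  rintro ⟨a, b⟩ hab
  exact Set.mem_iUnion.2 ⟨a, b, hab, rfl⟩

theorem finsum_mem_setOf_fst_eq_sum {α ι M : Type*} [Fintype ι] [AddCommMonoid M]
    (s : Set α) (g : α × ι → M) (hg : ({p | p.1 ∈ s} ∩ Function.support g).Finite) :
    ∑ᶠ p ∈ {p : α × ι | p.1 ∈ s}, g p = ∑ j, ∑ᶠ i ∈ s, g (i, j) := by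
  classical
  set G := {p : α × ι | p.1 ∈ s}.indicator g
  have hG : Function.HasFiniteSupport G := by
    rwa [Function.HasFiniteSupport, Set.support_indicator]
  have hslice (j : ι) : Function.HasFiniteSupport fun i => G (i, j) :=
    Set.Finite.preimage (Prod.mk_left_injective j).injOn hG
  calc ∑ᶠ p ∈ {p : α × ι | p.1 ∈ s}, g p
      = ∑ᶠ i, ∑ j, G (i, j) := by
        rw [finsum_mem_def, finsum_curry G hG]
        simp only [finsum_eq_sum_of_fintype]
    _ = ∑ j, ∑ᶠ i, G (i, j) := finsum_sum_comm _ _ fun j _ => hslice j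
    _ = ∑ j, ∑ᶠ i ∈ s, g (i, j) := by
        simp only [finsum_mem_def, G, Set.indicator_apply, Set.mem_ofPred_eq]

section Runners

variable {r : ℕ} {nn : Fin r → ℕ}

theorem sigBefore_add_le_of_lt {j k : Fin r} (h : j < k) :
    sigBefore nn j + nn j ≤ sigBefore nn k := by
  unfold sigBefore
  rw [add_comm, ← Finset.sum_insert (f := nn) (by simp)]
  refine Finset.sum_le_sum_of_subset fun l hl => ?_
  simp only [Finset.mem_insert, Finset.mem_filter, Finset.mem_univ, true_and] at hl ⊢
  rcases hl with rfl | hl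
  · exact h
  · exact hl.trans h

theorem sigBefore_add_le_nTot (j : Fin r) : sigBefore nn j + nn j ≤ nTot nn := by
  unfold sigBefore nTot
  rw [add_comm, ← Finset.sum_insert (f := nn) (by simp)]
  exact Finset.sum_le_sum_of_subset fun l _ => Finset.mem_univ l

theorem nTot_pos (hpos : ∀ j, 0 < nn j) (j : Fin r) : 0 < nTot nn :=
  (hpos j).trans_le ((Nat.le_add_left _ _).trans (sigBefore_add_le_nTot j))

theorem eq_of_sigBefore_add_eq {j k : Fin r} {z z' : ℤ} (hz : 0 ≤ z) (hzj : z < nn j)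
    (hz' : 0 ≤ z') (hzk : z' < nn k) (h : (sigBefore nn j : ℤ) + z = sigBefore nn k + z') :
    j = k := by
  rcases lt_trichotomy j k with hjk | rfl | hkj
  · have := sigBefore_add_le_of_lt (nn := nn) hjk
    omega
  · rfl
  · have := sigBefore_add_le_of_lt (nn := nn) hkj
    omega

/-- The blocks `[σ_{j-1}, σ_j)` cover `[0, n)` because they are disjoint and their sizes add up
to `n`. -/
theorem exists_sigBefore_add_eq {d : ℕ} (hd : d < nTot nn) :
    ∃ j, ∃ z < nn j, sigBefore nn j + z = d := by
  obtain ⟨⟨j, z⟩, hz, hjz⟩ := Finset.surj_on_of_inj_on_of_card_le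
    (s := Finset.univ.sigma fun j => Finset.range (nn j)) (t := Finset.range (nTot nn))
    (fun p _ => sigBefore nn p.1 + p.2)
    (fun p hp => by
      simp only [Finset.mem_sigma, Finset.mem_range] at hp ⊢
      have := sigBefore_add_le_nTot (nn := nn) p.1
      omega)
    (fun ⟨j, z⟩ ⟨k, z'⟩ hz hz' h => by
      simp only [Finset.mem_sigma, Finset.mem_range] at hz hz' h
      obtain rfl : j = k := eq_of_sigBefore_add_eq (nn := nn) (z := (z : ℤ)) (z' := (z' : ℤ))
        (by omega) (by omega) (by omega) (by omega) (by exact_mod_cast h)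
      simp only [Nat.add_left_cancel_iff] at h
      rw [h])
    (by simp [Finset.card_sigma, nTot]) d (Finset.mem_range.2 hd)
  simp only [Finset.mem_sigma, Finset.mem_range] at hz
  exact ⟨j, z, hz.2, hjz.symm⟩

variable (nn) in
/-- The integer at position `y` of runner `j`: writing `y = i n_j + z` with `0 ≤ z < n_j`, it is
`i n + σ_{j-1} + z`. -/
def fromRunners (p : Fin r × ℤ) : ℤ :=
  p.2 / nn p.1 * nTot nn + (sigBefore nn p.1 + p.2 % nn p.1)

theorem fromRunners_ediv_emod (hpos : ∀ j, 0 < nn j) (j : Fin r) (y : ℤ) :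
    fromRunners nn (j, y) / nTot nn = y / nn j ∧
      fromRunners nn (j, y) % nTot nn = sigBefore nn j + y % nn j := by
  have hj : (0 : ℤ) < nn j := by exact_mod_cast hpos j
  have hle : (sigBefore nn j : ℤ) + nn j ≤ nTot nn := by exact_mod_cast sigBefore_add_le_nTot j
  have := Int.emod_nonneg y hj.ne'
  have := Int.emod_lt_of_pos y hj
  rw [Int.ediv_emod_unique (by exact_mod_cast nTot_pos hpos j)]
  exact ⟨by simp only [fromRunners]; ring, by omega, by omega⟩

theorem fromRunners_add_mul {j : Fin r} {z : ℤ} (hz : 0 ≤ z) (hzj : z < nn j) (i : ℤ) :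
    fromRunners nn (j, z + i * nn j) = z + i * nTot nn + sigBefore nn j := by
  have hj : (nn j : ℤ) ≠ 0 := by omega
  simp only [fromRunners, Int.add_mul_ediv_right _ _ hj, Int.add_mul_emod_self_right,
    Int.ediv_eq_zero_of_lt hz hzj, Int.emod_eq_of_lt hz hzj]
  ring

theorem fromRunners_injective (hpos : ∀ j, 0 < nn j) : Function.Injective (fromRunners nn) := by
  rintro ⟨j, y⟩ ⟨k, y'⟩ h
  obtain ⟨hq, hr⟩ := fromRunners_ediv_emod hpos j y
  obtain ⟨hq', hr'⟩ := fromRunners_ediv_emod hpos k y'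
  rw [h] at hq hr
  have hj : (0 : ℤ) < nn j := by exact_mod_cast hpos j
  have hk : (0 : ℤ) < nn k := by exact_mod_cast hpos k
  obtain rfl : j = k := eq_of_sigBefore_add_eq (Int.emod_nonneg y hj.ne') (Int.emod_lt_of_pos y hj)
    (Int.emod_nonneg y' hk.ne') (Int.emod_lt_of_pos y' hk) (hr.symm.trans hr')
  have hdiv : y / nn j = y' / nn j := hq.symm.trans hq'
  have hmod : y % nn j = y' % nn j := by omega
  rw [← Int.emod_add_ediv_mul y (nn j), ← Int.emod_add_ediv_mul y' (nn j), hdiv, hmod]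

theorem fromRunners_surjective (hN : 0 < nTot nn) : Function.Surjective (fromRunners nn) := by
  intro x
  have hN' : (0 : ℤ) < nTot nn := by exact_mod_cast hN
  have h0 := Int.emod_nonneg x hN'.ne'
  have h1 := Int.emod_lt_of_pos x hN'
  obtain ⟨j, z, hz, hjz⟩ := exists_sigBefore_add_eq (nn := nn) (d := (x % nTot nn).toNat)
    (by omega)
  refine ⟨(j, z + x / nTot nn * nn j), ?_⟩
  rw [fromRunners_add_mul (by omega) (by exact_mod_cast hz)]
  have := Int.emod_add_ediv_mul x (nTot nn)
  omega

theorem fromRunners_nonneg_iff (hpos : ∀ j, 0 < nn j) (j : Fin r) (y : ℤ) :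
    0 ≤ fromRunners nn (j, y) ↔ 0 ≤ y := by
  rw [← Int.ediv_nonneg_iff_of_pos (b := nTot nn) (by exact_mod_cast nTot_pos hpos j),
    (fromRunners_ediv_emod hpos j y).1,
    Int.ediv_nonneg_iff_of_pos (b := nn j) (by exact_mod_cast hpos j)]

variable (nn) in
/-- `B_j`: the part of `B` lying on runner `j`, in the coordinates of that runner. -/
def toRunners (B : Set ℤ) (j : Fin r) : Set ℤ :=
  {y | fromRunners nn (j, y) ∈ B}

theorem toRunners_bijective (hpos : ∀ j, 0 < nn j) (hN : 0 < nTot nn) :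
    Function.Bijective (toRunners nn) := by
  refine ⟨fun B B' h => Set.preimage_injective.2 (fromRunners_surjective hN) ?_, fun F => ?_⟩
  · ext ⟨j, y⟩
    exact Set.ext_iff.1 (congrFun h j) y
  · refine ⟨fromRunners nn '' {p | p.2 ∈ F p.1}, funext fun j => ?_⟩
    change Prod.mk j ⁻¹' (fromRunners nn ⁻¹' (fromRunners nn '' _)) = F j
    rw [Set.preimage_image_eq _ (fromRunners_injective hpos)]
    rfl

theorem finite_iff_forall_finite_toRunners (hpos : ∀ j, 0 < nn j) (hN : 0 < nTot nn)
    (s : Set ℤ) : s.Finite ↔ ∀ j, (toRunners nn s j).Finite := by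
  change _ ↔ ∀ j, (Prod.mk j ⁻¹' (fromRunners nn ⁻¹' s)).Finite
  rw [← Set.finite_iff_forall_finite_preimage_prodMk]
  exact ⟨fun hs => hs.preimage (fromRunners_injective hpos).injOn,
    fun hs => hs.of_preimage (fromRunners_surjective hN)⟩

theorem isBetaSet_iff_forall_toRunners (hpos : ∀ j, 0 < nn j) (hN : 0 < nTot nn) (B : Set ℤ) :
    IsBetaSet B ↔ ∀ j, IsBetaSet (toRunners nn B j) := by
  rw [IsBetaSet, finite_iff_forall_finite_toRunners hpos hN,
    finite_iff_forall_finite_toRunners hpos hN, ← forall_and]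
  refine forall_congr' fun j => ?_
  have hnonneg : toRunners nn (B ∩ {x | 0 ≤ x}) j = toRunners nn B j ∩ {y | 0 ≤ y} := by
    ext y; simp [toRunners, fromRunners_nonneg_iff hpos]
  have hneg : toRunners nn ({x | x < 0} \ B) j = {y | y < 0} \ toRunners nn B j := by
    ext y
    simp only [toRunners, Set.mem_sdiff, Set.mem_ofPred_eq, ← not_le, fromRunners_nonneg_iff hpos]
  rw [hnonneg, hneg, IsBetaSet]

theorem mem_Xset_iff {B : Set ℤ} {i z : ℤ} {j : Fin r} :
    z ∈ Xset nn B i j ↔ 0 ≤ z ∧ z < nn j ∧ z + i * nTot nn + sigBefore nn j ∈ B := by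
  constructor
  · rintro ⟨x, hxB, h1, h2, rfl⟩
    exact ⟨by omega, by omega, by rwa [show x - i * nTot nn - sigBefore nn j + i * nTot nn
      + sigBefore nn j = x by ring]⟩
  · rintro ⟨h0, h1, hB⟩
    exact ⟨z + i * nTot nn + sigBefore nn j, hB, by omega, by omega, by ring⟩

theorem mem_X1_iff {m : ℕ} {C : Set ℤ} {i z : ℤ} :
    z ∈ X1 m C i ↔ 0 ≤ z ∧ z < m ∧ z + i * m ∈ C := by
  constructor
  · rintro ⟨x, hx, h1, h2, rfl⟩
    exact ⟨by omega, by linarith, by rwa [show x - i * m + i * m = x by ring]⟩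
  · rintro ⟨h0, h1, hC⟩
    exact ⟨z + i * m, hC, by omega, by linarith, by ring⟩

theorem setOf_Xset_eq_toRunners (hpos : ∀ j, 0 < nn j) (B : Set ℤ) (j : Fin r) :
    {y : ℤ | ∃ i : ℤ, ∃ x ∈ Xset nn B i j, y = x + i * nn j} = toRunners nn B j := by
  have hj : (0 : ℤ) < nn j := by exact_mod_cast hpos j
  ext y
  constructor
  · rintro ⟨i, x, hx, rfl⟩
    obtain ⟨h0, h1, hB⟩ := mem_Xset_iff.1 hx
    rwa [toRunners, Set.mem_ofPred_eq, fromRunners_add_mul h0 h1]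
  · intro hy
    refine ⟨y / nn j, y % nn j, mem_Xset_iff.2 ⟨Int.emod_nonneg y hj.ne',
      Int.emod_lt_of_pos y hj, ?_⟩, (Int.emod_add_ediv_mul y (nn j)).symm⟩
    rwa [show y % nn j + y / nn j * nTot nn + sigBefore nn j = fromRunners nn (j, y) by
      unfold fromRunners; ring]

theorem X1_toRunners (B : Set ℤ) (i : ℤ) (j : Fin r) :
    X1 (nn j) (toRunners nn B j) i = Xset nn B i j := by
  ext z
  rw [mem_X1_iff, mem_Xset_iff]
  refine and_congr_right fun h0 => and_congr_right fun h1 => ?_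
  rw [toRunners, Set.mem_ofPred_eq, fromRunners_add_mul h0 h1]

theorem tfun_eq_iff_forall_tfun1_toRunners (B : Set ℤ) (t : ℤ × Fin r → ℕ) :
    tfun nn B = t ↔ ∀ j, tfun1 (nn j) (toRunners nn B j) = fun i => t (i, j) := by
  simp only [funext_iff, tfun, tfun1, X1_toRunners, Prod.forall]
  exact forall_comm

theorem memT1_slice {t : ℤ × Fin r → ℕ} (ht : memT nn t) (j : Fin r) :
    memT1 (nn j) fun i => t (i, j) :=
  ⟨fun i => ht.1 (i, j), ht.2.1.preimage (Prod.mk_left_injective j).injOn,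
    ht.2.2.preimage (Prod.mk_left_injective j).injOn⟩

theorem sum_sT1_slice {t : ℤ × Fin r → ℕ} (ht : memT nn t) :
    ∑ j, sT1 (nn j) (fun i => t (i, j)) = sT nn t := by
  have hnonneg := finsum_mem_setOf_fst_eq_sum {i : ℤ | 0 ≤ i} (fun p => (t p : ℤ))
    (ht.2.1.subset fun p ⟨h0, h1⟩ => ⟨h0, by simpa using h1⟩)
  have hneg := finsum_mem_setOf_fst_eq_sum {i : ℤ | i < 0} (fun p => (nn p.2 : ℤ) - t p)
    (ht.2.2.subset fun p ⟨h0, h1⟩ => ⟨h0, fun h => h1 (by simp [h])⟩)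
  simp only [sT, sT1, Set.mem_ofPred_eq] at hnonneg hneg ⊢
  rw [hnonneg, hneg, Finset.sum_sub_distrib]

end Runners

theorem statement17_general (r : ℕ) (hr : 0 < r) (nn : Fin r → ℕ) (hpos : ∀ j : Fin r, 0 < nn j)
    (t : ℤ × Fin r → ℕ) (ht : memT nn t) :
    (∀ j : Fin r, memT1 (nn j) (fun i : ℤ => t (i, j))) ∧
    (∑ j : Fin r, sT1 (nn j) (fun i : ℤ => t (i, j))) = sT nn t ∧
    Set.BijOn
      (fun (B : Set ℤ) (j : Fin r) =>
        {y : ℤ | ∃ i : ℤ, ∃ x ∈ Xset nn B i j, y = x + i * (nn j : ℤ)})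
      {B : Set ℤ | IsBetaSet B ∧ tfun nn B = t}
      {F : Fin r → Set ℤ |
        ∀ j : Fin r, IsBetaSet (F j) ∧ tfun1 (nn j) (F j) = fun i : ℤ => t (i, j)} := by
  have hN : 0 < nTot nn := nTot_pos hpos ⟨0, hr⟩
  refine ⟨memT1_slice ht, sum_sT1_slice ht, ?_⟩
  have hmap : (fun (B : Set ℤ) (j : Fin r) =>
      {y : ℤ | ∃ i : ℤ, ∃ x ∈ Xset nn B i j, y = x + i * (nn j : ℤ)}) = toRunners nn :=
    funext fun B => funext (setOf_Xset_eq_toRunners hpos B)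
  rw [hmap]
  convert (toRunners_bijective hpos hN).bijOn_preimage using 1
  ext B
  rw [Set.mem_ofPred_eq, Set.mem_preimage, Set.mem_ofPred_eq, forall_and,
    isBetaSet_iff_forall_toRunners hpos hN, tfun_eq_iff_forall_tfun1_toRunners]

/-- (1) Each `𝐭_j : i ↦ 𝐭(i,j)` lies in `T_{(n_j)}` and
`Σ_j 𝔰(𝐭_j) = 𝔰(𝐭)`; (2) `B ↦ (B_1, …, B_r)` with
`B_j = {x + i n_j : i ∈ ℤ, x ∈ X^𝐧_{i,j}(B)}` is a bijection from `𝔅_𝐭` onto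
`𝔅_{𝐭_1} × ⋯ × 𝔅_{𝐭_r}`. -/
theorem statement17 (n r : ℕ) (hr : 0 < r) (nn : Fin r → ℕ) (hpos : ∀ j : Fin r, 0 < nn j)
    (hsum : nTot nn = n) (t : ℤ × Fin r → ℕ) (ht : memT nn t) :
    (∀ j : Fin r, memT1 (nn j) (fun i : ℤ => t (i, j))) ∧
    (∑ j : Fin r, sT1 (nn j) (fun i : ℤ => t (i, j))) = sT nn t ∧
    Set.BijOn
      (fun (B : Set ℤ) (j : Fin r) =>
        {y : ℤ | ∃ i : ℤ, ∃ x ∈ Xset nn B i j, y = x + i * (nn j : ℤ)})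
      {B : Set ℤ | IsBetaSet B ∧ tfun nn B = t}
      {F : Fin r → Set ℤ |
        ∀ j : Fin r, IsBetaSet (F j) ∧ tfun1 (nn j) (F j) = fun i : ℤ => t (i, j)} :=
  statement17_general r hr nn hpos t ht
end
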